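/- arXiv:2305.08167 — 2 statements merged into one kernel-verified Lean document; each statement's English description precedes it below -/
import Mathlib

section
/- Let F be a field and let U(t) = Σ_{k=0}^N U_k t^k be an n×n paraunitary matrix polynomial over F with matrix coefficients U_k ∈ F^{n×n}. Let W be the n(N+1)×n(N+1) block circulant matrix whose (a,b)-th n×n block (for block indices a, b ∈ {0,1,…,N}) is U_{(b−a) mod (N+1)}; in particular its first block row is (U_0, U_1, …, U_N). Then W is orthogonal: W·Wᵀ = I_{n(N+1)}. -/
open LaurentPolynomial Matrix Finset

/-- A Laurent polynomial has only nonnegative powers of `t`: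
its coefficients of `t^(-k)` vanish for all `k ≥ 1`. -/
def OnlyNonnegPowers {F : Type*} [Field F] (p : F[T;T⁻¹]) : Prop :=
  ∀ m : ℤ, m < 0 → p.coeff m = 0

/-- The Laurent polynomial `ζ(t) = ∑_{k=1}^N g k * t^(-k)`. -/
noncomputable def zetaPoly {F : Type*} [Field F] (N : ℕ) (g : ℕ → F) : F[T;T⁻¹] :=
  ∑ k ∈ Finset.Icc 1 N, LaurentPolynomial.C (g k) * LaurentPolynomial.T (-(k : ℤ))

/-- The `n × n` matrix `G(t)`: the identity matrix except that its last row is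
`(ζ_1(t), …, ζ_{n-1}(t), 1)`, where `ζ_i(t) = ∑_{k=1}^N γ_{i k} t^(-k)`
(rows and columns are 0-based, so row `n-1` is the last one and its `j`-th
entry, `j < n-1`, is `ζ_{j+1}`). -/
noncomputable def Gmat {F : Type*} [Field F] (n N : ℕ) (γ : ℕ → ℕ → F) :
    Matrix (Fin n) (Fin n) F[T;T⁻¹] :=
  fun i j =>
    if i.val = n - 1 then (if j.val = n - 1 then 1 else zetaPoly N (γ (j.val + 1)))
    else (if i = j then 1 else 0)

/-- The diagonal matrix `diag(1, …, 1, t^(-N))`. -/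
noncomputable def diagTN (F : Type*) [Field F] (n N : ℕ) :
    Matrix (Fin n) (Fin n) F[T;T⁻¹] :=
  Matrix.diagonal (fun i => if i.val = n - 1 then LaurentPolynomial.T (-(N : ℤ)) else 1)

/-- The matrix polynomial `U(t) = ∑_{k=0}^N U_k t^k` as a matrix of Laurent polynomials. -/
noncomputable def matPoly {F : Type*} [Field F] (n N : ℕ)
    (U : Fin (N + 1) → Matrix (Fin n) (Fin n) F) :
    Matrix (Fin n) (Fin n) F[T;T⁻¹] :=
  fun i j => ∑ k : Fin (N + 1), LaurentPolynomial.C (U k i j) * LaurentPolynomial.T (k : ℤ)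

/-- For a matrix Laurent polynomial `P(t) = ∑_k C_k t^k`, its tilde
`P̃(t) = ∑_k C_kᵀ t^(-k)` (transpose entrywise composed with `t ↦ t⁻¹`). -/
noncomputable def tildeMat {F : Type*} [Field F] {n : ℕ}
    (P : Matrix (Fin n) (Fin n) F[T;T⁻¹]) : Matrix (Fin n) (Fin n) F[T;T⁻¹] :=
  fun i j => LaurentPolynomial.invert (P j i)

/-- A matrix Laurent polynomial `P` is paraunitary if `P(t) ⬝ P̃(t) = I`. -/
def Paraunitary {F : Type*} [Field F] {n : ℕ}
    (P : Matrix (Fin n) (Fin n) F[T;T⁻¹]) : Prop :=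
  P * tildeMat P = 1

/-- The `(N+1) × (N+1)` Hankel matrix `Γ` built from `g 1, …, g N`
(with the conventions `g 0 = 0` and `g k = 0` for `k > N`): in 0-based indices,
the `(a, b)` entry is `g (a + b)`. -/
def hankelMat {F : Type*} [Field F] (N : ℕ) (g : ℕ → F) :
    Matrix (Fin (N + 1)) (Fin (N + 1)) F :=
  fun a b => if 1 ≤ a.val + b.val ∧ a.val + b.val ≤ N then g (a.val + b.val) else 0

/-- `Δ = ∑_{i=1}^{n-1} Γ_i ^ 2 + I_{N+1}`. -/
def deltaMat {F : Type*} [Field F] (n N : ℕ) (γ : ℕ → ℕ → F) :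
    Matrix (Fin (N + 1)) (Fin (N + 1)) F :=
  (∑ i ∈ Finset.Icc 1 (n - 1), (hankelMat N (γ i)) ^ 2) + 1

/-! The `(a, b)` block of `W Wᵀ` is `∑ₖ U_k U_{k-d}ᵀ` with `d = b - a` in `ℤ/(N+1)`. As `k` and
`k' = k - d` range over `0, …, N`, the integer `k - k'` is `d` or `d - (N + 1)`, so this block is the
sum of the coefficients of `t^d` and `t^(d-N-1)` in `U(t) Ũ(t) = I`: the second vanishes because
`d - N - 1 < 0`, and the first is `I` if `d = 0` and `0` otherwise. -/

section Circulant

variable {G ι R : Type*} [AddCommGroup G] [Fintype G] [Fintype ι] [Semiring R]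

theorem circulant_mul_transpose_apply (U : G → Matrix ι ι R) (W : Matrix (G × ι) (G × ι) R)
    (hW : ∀ a b i j, W (a, i) (b, j) = U (b - a) i j) (a b : G) (i j : ι) :
    (W * Wᵀ) (a, i) (b, j) = (∑ k, U k * (U (k - (b - a)))ᵀ) i j := by
  rw [mul_apply, Fintype.sum_prod_type, Matrix.sum_apply,
    ← _root_.Equiv.sum_comp (Equiv.addRight a)]
  refine Finset.sum_congr rfl fun k _ => ?_
  have hk : k + a - b = k - (b - a) := by abel
  simp only [mul_apply, transpose_apply, hW, Equiv.coe_addRight, add_sub_cancel_right, hk]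

end Circulant

theorem Fin.eq_sub_iff_intCast_sub_eq {N : ℕ} (k k' d : Fin (N + 1)) :
    k' = k - d ↔ (k : ℤ) - k' = d ∨ (k : ℤ) - k' = d - (N + 1) := by
  rw [eq_sub_iff_add_eq, Fin.ext_iff, Fin.val_add]
  have := k.isLt; have := k'.isLt; have := d.isLt
  rcases Nat.lt_or_ge (k'.val + d.val) (N + 1) with h | h
  · rw [Nat.mod_eq_of_lt h]; omega
  · rw [Nat.mod_eq_sub_mod h, Nat.mod_eq_of_lt (by omega)]; omega

section Paraunitary

variable {F : Type*} [Field F] {n N : ℕ}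

/-- The coefficient of `t^m` in `U(t) Ũ(t)`. -/
def autocorrelation (U : Fin (N + 1) → Matrix (Fin n) (Fin n) F) (m : ℤ) :
    Matrix (Fin n) (Fin n) F :=
  ∑ k : Fin (N + 1), ∑ k' : Fin (N + 1), if (k : ℤ) - k' = m then U k * (U k')ᵀ else 0

theorem coeff_matPoly_mul_tildeMat (U : Fin (N + 1) → Matrix (Fin n) (Fin n) F) (m : ℤ)
    (i j : Fin n) :
    ((matPoly n N U * tildeMat (matPoly n N U)) i j).coeff m = autocorrelation U m i j := by
  simp only [mul_apply, matPoly, tildeMat, map_sum, _root_.map_mul, invert_C, invert_T]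
  simp only [← single_eq_C_mul_T, Finset.sum_mul_sum, AddMonoidAlgebra.single_mul_single,
    AddMonoidAlgebra.coeff_sum, AddMonoidAlgebra.coeff_single, Finsupp.coe_finsetSum,
    Finset.sum_apply, Finsupp.single_apply, ← sub_eq_add_neg, autocorrelation, Matrix.sum_apply,
    Matrix.ite_apply, Matrix.zero_apply, mul_apply,
    transpose_apply]
  rw [Finset.sum_comm]
  refine Finset.sum_congr rfl fun k _ => ?_
  rw [Finset.sum_comm]
  exact Finset.sum_congr rfl fun k' _ => by rw [Finset.sum_ite_irrel, Finset.sum_const_zero]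

theorem autocorrelation_of_paraunitary {U : Fin (N + 1) → Matrix (Fin n) (Fin n) F}
    (hpu : Paraunitary (matPoly n N U)) (m : ℤ) :
    autocorrelation U m = if m = 0 then 1 else 0 := by
  ext i j
  rw [← coeff_matPoly_mul_tildeMat, hpu, Matrix.ite_apply, one_apply, one_apply]
  by_cases hij : i = j
  · simp only [hij, if_true, AddMonoidAlgebra.one_def, AddMonoidAlgebra.coeff_single,
      Finsupp.single_apply, eq_comm, Matrix.zero_apply]
  · simp only [hij, if_false, AddMonoidAlgebra.coeff_zero, Finsupp.coe_zero, Pi.zero_apply,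
      Matrix.zero_apply, ite_self]

theorem sum_mul_transpose_sub_eq_autocorrelation_add (U : Fin (N + 1) → Matrix (Fin n) (Fin n) F)
    (d : Fin (N + 1)) :
    ∑ k, U k * (U (k - d))ᵀ = autocorrelation U d + autocorrelation U (d - (N + 1)) := by
  simp only [autocorrelation, ← Finset.sum_add_distrib]
  refine Finset.sum_congr rfl fun k _ => ?_
  rw [← Fintype.sum_ite_eq' (k - d) fun k' => U k * (U k')ᵀ]
  refine Finset.sum_congr rfl fun k' _ => ?_
  rw [if_congr (Fin.eq_sub_iff_intCast_sub_eq k k' d) rfl rfl]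
  by_cases h₁ : (k : ℤ) - k' = d
  · have h₂ : (k : ℤ) - k' ≠ d - (N + 1) := by omega
    rw [if_pos (.inl h₁), if_pos h₁, if_neg h₂, add_zero]
  · simp only [h₁, false_or, if_false, zero_add]

theorem sum_mul_transpose_sub_eq_ite_of_paraunitary {U : Fin (N + 1) → Matrix (Fin n) (Fin n) F}
    (hpu : Paraunitary (matPoly n N U)) (d : Fin (N + 1)) :
    ∑ k, U k * (U (k - d))ᵀ = if d = 0 then 1 else 0 := by
  have hd : (d : ℤ) - (N + 1) ≠ 0 := by omega
  rw [sum_mul_transpose_sub_eq_autocorrelation_add, autocorrelation_of_paraunitary hpu,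
    autocorrelation_of_paraunitary hpu, if_neg hd, add_zero]
  simp only [Int.natCast_eq_zero, Fin.val_eq_zero_iff]

end Paraunitary

theorem stmt6 (F : Type*) [Field F] (n N : ℕ)
    (U : Fin (N + 1) → Matrix (Fin n) (Fin n) F)
    (hpu : Paraunitary (matPoly n N U))
    (W : Matrix (Fin (N + 1) × Fin n) (Fin (N + 1) × Fin n) F)
    (hW : ∀ a b : Fin (N + 1), ∀ i j : Fin n, W (a, i) (b, j) = U (b - a) i j) :
    W * Wᵀ = 1 := by
  ext ⟨a, i⟩ ⟨b, j⟩
  rw [circulant_mul_transpose_apply U W hW, sum_mul_transpose_sub_eq_ite_of_paraunitary hpu,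
    Matrix.ite_apply, one_apply, one_apply, Matrix.zero_apply]
  simp only [sub_eq_zero, Prod.mk.injEq, eq_comm (a := b), ite_and]
end

section
/- Let F be a field, n ≥ 2, N ≥ 1, and let ζ_i(t) = Σ_{k=1}^N γ_{ik} t^{−k} with γ_{ik} ∈ F for i = 1,…,n−1. Suppose that for each j ∈ {1,…,n} there is a vector of polynomials x^j = (x^j_1,…,x^j_n), each x^j_i ∈ F[t] of degree at most N, such that: (a) for each i = 1,…,n−1, the Laurent polynomial ζ_i(t)·x^j_n(t) − x̃^j_i(t) has only nonnegative powers of t; (b) the Laurent polynomial Σ_{i=1}^{n−1} ζ_i(t)·x^j_i(t) + x̃^j_n(t) has only nonnegative powers of t; and (c) x^j_i(1) = δ_{ij} for all i. Define the n×n matrix U(t) whose (i,j)-entry is x^j_i(t) for i = 1,…,n−1 and whose (n,j)-entry is t^N·x̃^j_n(t). Then U is paraunitary, i.e., U(t)·Ũ(t) = I_n, and every entry of G(t)·diag(1,1,…,1,t^{−N})·U(t) has only nonnegative powers of t. -/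
open LaurentPolynomial Matrix Finset

/-!
Put `P = diag(1, …, 1, t^(-N)) U`, so that `Ũ U = P̃ P`. By (b) the matrix `G P` has
polynomial entries, and by (a) so has `P̃ G⁻¹`, where `G⁻¹` is `G` with every `ζ_i` replaced
by `-ζ_i`. Hence `P̃ P = (P̃ G⁻¹)(G P)` is a polynomial matrix in `t`; it equals its own tilde,
so it is also polynomial in `t⁻¹`, i.e. constant. Its value at `t = 1` is `P(1)ᵀ P(1) = I`
by (c).
-/

section NonnegPowers

variable {F : Type*} [Field F]

variable (F) in
def nonnegSubring : Subring F[T;T⁻¹] where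
  carrier := {p | OnlyNonnegPowers p}
  zero_mem' _ _ := rfl
  one_mem' m hm := by
    rw [← T_zero, T, AddMonoidAlgebra.coeff_single, Finsupp.single_apply, if_neg hm.ne']
  add_mem' {p q} hp hq m hm := by
    rw [AddMonoidAlgebra.coeff_add, Finsupp.add_apply, hp m hm, hq m hm, add_zero]
  neg_mem' {p} hp m hm := by
    rw [AddMonoidAlgebra.coeff_neg, Finsupp.neg_apply, hp m hm, neg_zero]
  mul_mem' {p q} hp hq m hm := by
    classical
    by_contra h
    obtain ⟨u, hu, v, hv, rfl⟩ := Finset.mem_add.mp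
      (AddMonoidAlgebra.support_coeff_mul_subset p q (Finsupp.mem_support_iff.mpr h))
    have hu0 : 0 ≤ u := le_of_not_gt fun hu' => Finsupp.mem_support_iff.mp hu (hp u hu')
    have hv0 : 0 ≤ v := le_of_not_gt fun hv' => Finsupp.mem_support_iff.mp hv (hq v hv')
    omega

theorem onlyNonnegPowers_C_mul_T (c : F) (k : ℕ) : OnlyNonnegPowers (C c * T (k : ℤ)) :=
  fun m hm => by
    rw [← single_eq_C_mul_T, AddMonoidAlgebra.coeff_single, Finsupp.single_apply,
      if_neg (by omega)]

theorem eval₂_one_invert (p : F[T;T⁻¹]) :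
    eval₂ (RingHom.id F) 1 (invert p) = eval₂ (RingHom.id F) 1 p := by
  induction p using LaurentPolynomial.induction_on' with
  | add p q hp hq => rw [map_add, map_add, map_add, hp, hq]
  | C_mul_T k c => simp [eval₂_C_mul_T]

theorem eq_C_eval₂_one_of_onlyNonnegPowers {p : F[T;T⁻¹]} (hp : OnlyNonnegPowers p)
    (hp' : OnlyNonnegPowers (invert p)) : p = C (eval₂ (RingHom.id F) 1 p) := by
  have hconst : p = C (p.coeff 0) := by
    ext m
    rw [← single_eq_C, AddMonoidAlgebra.coeff_single, Finsupp.single_apply]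
    rcases lt_trichotomy m 0 with hm | rfl | hm
    · rw [hp m hm, if_neg hm.ne']
    · rw [if_pos rfl]
    · rw [if_neg hm.ne, ← neg_neg m, ← invert_apply, hp' (-m) (by omega)]
  rw [hconst, eval₂_C]
  rfl

noncomputable def xPol (N : ℕ) (c : Fin (N + 1) → F) : F[T;T⁻¹] :=
  ∑ k : Fin (N + 1), C (c k) * T (k : ℤ)

theorem onlyNonnegPowers_xPol (N : ℕ) (c : Fin (N + 1) → F) : OnlyNonnegPowers (xPol N c) :=
  (nonnegSubring F).sum_mem fun k _ => onlyNonnegPowers_C_mul_T (c k) k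

theorem invert_xPol (N : ℕ) (c : Fin (N + 1) → F) :
    invert (xPol N c) = ∑ k : Fin (N + 1), C (c k) * T (-(k : ℤ)) := by
  simp [xPol, map_sum]

theorem eval₂_one_xPol (N : ℕ) (c : Fin (N + 1) → F) :
    eval₂ (RingHom.id F) 1 (xPol N c) = ∑ k, c k := by
  simp [xPol, map_sum, eval₂_C_mul_T]

end NonnegPowers

section TildeMat

variable {F : Type*} [Field F] {n : ℕ}

theorem tildeMat_mul (A B : Matrix (Fin n) (Fin n) F[T;T⁻¹]) :
    tildeMat (A * B) = tildeMat B * tildeMat A := by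
  ext i j
  simp [tildeMat, mul_apply, map_sum, mul_comm]

theorem tildeMat_tildeMat (A : Matrix (Fin n) (Fin n) F[T;T⁻¹]) : tildeMat (tildeMat A) = A :=
  Matrix.ext fun i j => involutive_invert (A i j)

theorem tildeMat_diagonal (d : Fin n → F[T;T⁻¹]) :
    tildeMat (diagonal d) = diagonal fun i => invert (d i) := by
  ext i j
  by_cases h : i = j
  · subst h; simp [tildeMat]
  · simp [tildeMat, diagonal_apply_ne _ h, diagonal_apply_ne' _ h]

theorem tildeMat_mul_self_of_mul_left {D : Matrix (Fin n) (Fin n) F[T;T⁻¹]}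
    (hD : tildeMat D * D = 1) (U : Matrix (Fin n) (Fin n) F[T;T⁻¹]) :
    tildeMat (D * U) * (D * U) = tildeMat U * U := by
  rw [tildeMat_mul, Matrix.mul_assoc, ← Matrix.mul_assoc (tildeMat D), hD, Matrix.one_mul]

theorem map_tildeMat_eval₂_one (A : Matrix (Fin n) (Fin n) F[T;T⁻¹]) :
    (tildeMat A).map (eval₂ (RingHom.id F) 1) = (A.map (eval₂ (RingHom.id F) 1))ᵀ := by
  ext i j
  exact eval₂_one_invert (A j i)

theorem onlyNonnegPowers_mul_apply {A B : Matrix (Fin n) (Fin n) F[T;T⁻¹]}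
    (hA : ∀ i j, OnlyNonnegPowers (A i j)) (hB : ∀ i j, OnlyNonnegPowers (B i j))
    (i j : Fin n) :
    OnlyNonnegPowers ((A * B) i j) :=
  (nonnegSubring F).sum_mem fun k _ => (nonnegSubring F).mul_mem (hA i k) (hB k j)

theorem tildeMat_mul_self_eq_one {P A B : Matrix (Fin n) (Fin n) F[T;T⁻¹]} (hAB : A * B = 1)
    (hA : ∀ i j, OnlyNonnegPowers ((tildeMat P * A) i j))
    (hB : ∀ i j, OnlyNonnegPowers ((B * P) i j))
    (hP : P.map (eval₂ (RingHom.id F) 1) = 1) : tildeMat P * P = 1 := by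
  set M := tildeMat P * P
  have hM : ∀ i j, OnlyNonnegPowers (M i j) := by
    have hsplit : M = (tildeMat P * A) * (B * P) := by
      rw [Matrix.mul_assoc, ← Matrix.mul_assoc A, hAB, Matrix.one_mul]
    rw [hsplit]
    exact onlyNonnegPowers_mul_apply hA hB
  have hMtilde : tildeMat M = M := by rw [tildeMat_mul, tildeMat_tildeMat]
  have hMeval : M.map (eval₂ (RingHom.id F) 1) = 1 := by
    rw [Matrix.map_mul, map_tildeMat_eval₂_one, hP, transpose_one, Matrix.one_mul]
  calc M = (M.map (eval₂ (RingHom.id F) 1)).map C := Matrix.ext fun i j => by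
        have hinv : invert (M i j) = M j i := congrFun (congrFun hMtilde j) i
        exact eq_C_eval₂_one_of_onlyNonnegPowers (hM i j) (hinv ▸ hM j i)
    _ = 1 := by rw [hMeval, Matrix.map_one C (map_zero C) (map_one C)]

end TildeMat

section Gmat

variable {F : Type*} [Field F] {n : ℕ}

theorem sum_eq_sum_filter_lt_add_last {M : Type*} [AddCommMonoid M] (hn : 0 < n)
    (f : Fin n → M) :
    ∑ i, f i =
      ∑ i ∈ univ.filter (fun i : Fin n => i.val < n - 1), f i + f ⟨n - 1, by omega⟩ := by
  rw [← sum_filter_add_sum_filter_not univ (fun i : Fin n => i.val < n - 1)]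
  congr 1
  convert sum_singleton f (⟨n - 1, by omega⟩ : Fin n)
  ext i
  simp only [mem_filter, mem_univ, true_and, mem_singleton, Fin.ext_iff]
  omega

theorem zetaPoly_neg (N : ℕ) (g : ℕ → F) : zetaPoly N (-g) = -zetaPoly N g := by
  simp [zetaPoly]

variable (N : ℕ) (γ : ℕ → ℕ → F)

theorem mul_Gmat_apply (hn : 0 < n) (M : Matrix (Fin n) (Fin n) F[T;T⁻¹]) (i k : Fin n) :
    (M * Gmat n N γ) i k = if k.val = n - 1 then M i k
      else M i k + M i ⟨n - 1, by omega⟩ * zetaPoly N (γ (k.val + 1)) := by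
  have hfilter : ∑ m ∈ univ.filter (fun m : Fin n => m.val < n - 1), M i m * Gmat n N γ m k
      = ∑ m ∈ univ.filter (fun m : Fin n => m.val < n - 1), if k = m then M i m else 0 := by
    refine sum_congr rfl fun m hm => ?_
    simp [Gmat, (mem_filter.mp hm).2.ne, eq_comm]
  have hlast : Gmat n N γ ⟨n - 1, by omega⟩ k
      = if k.val = n - 1 then 1 else zetaPoly N (γ (k.val + 1)) := by simp [Gmat]
  rw [mul_apply, sum_eq_sum_filter_lt_add_last hn, hfilter, sum_ite_eq, hlast]
  by_cases hk : k.val = n - 1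
  · simp [show k = ⟨n - 1, by omega⟩ from Fin.ext hk]
  · simp [hk, show k.val < n - 1 by omega]

theorem Gmat_mul_apply (hn : 0 < n) (M : Matrix (Fin n) (Fin n) F[T;T⁻¹]) (i j : Fin n) :
    (Gmat n N γ * M) i j = if i.val = n - 1 then
        ∑ m ∈ univ.filter (fun m : Fin n => m.val < n - 1), zetaPoly N (γ (m.val + 1)) * M m j
          + M ⟨n - 1, by omega⟩ j
      else M i j := by
  rw [mul_apply]
  split_ifs with hi
  · rw [sum_eq_sum_filter_lt_add_last hn]
    congr 1
    · refine sum_congr rfl fun m hm => ?_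
      simp [Gmat, hi, (mem_filter.mp hm).2.ne]
    · simp [Gmat, hi]
  · simp [Gmat, hi]

theorem Gmat_mul_Gmat_neg (hn : 0 < n) : Gmat n N γ * Gmat n N (-γ) = 1 := by
  ext1 i k
  rw [mul_Gmat_apply N _ hn]
  by_cases hk : k.val = n - 1 <;> by_cases hi : i.val = n - 1 <;>
    simp [Gmat, one_apply, Fin.ext_iff, hi, hk, zetaPoly_neg]
  omega

end Gmat

section Xmat

variable {F : Type*} [Field F] {n : ℕ}

theorem tildeMat_diagTN_mul_diagTN (n N : ℕ) : tildeMat (diagTN F n N) * diagTN F n N = 1 := by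
  rw [diagTN, tildeMat_diagonal, diagonal_mul_diagonal, ← diagonal_one]
  congr 1
  funext i
  split_ifs
  · rw [invert_T, ← T_add, neg_neg, add_neg_cancel, T_zero]
  · rw [map_one, one_mul]

noncomputable def Xmat (N : ℕ) (a : Fin n → Fin n → Fin (N + 1) → F) :
    Matrix (Fin n) (Fin n) F[T;T⁻¹] :=
  fun i j => if i.val = n - 1 then invert (xPol N (a j i)) else xPol N (a j i)

variable (N : ℕ) (γ : ℕ → ℕ → F) {a : Fin n → Fin n → Fin (N + 1) → F}

theorem diagTN_mul_eq_Xmat (hn : 0 < n) {U : Matrix (Fin n) (Fin n) F[T;T⁻¹]}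
    (hU : ∀ i j : Fin n, U i j =
      if i.val = n - 1 then
        T (N : ℤ) * ∑ k : Fin (N + 1), C (a j ⟨n - 1, by omega⟩ k) * T (-(k : ℤ))
      else ∑ k : Fin (N + 1), C (a j i k) * T (k : ℤ)) :
    diagTN F n N * U = Xmat N a := by
  ext1 i j
  rw [diagTN, diagonal_mul, hU]
  dsimp only [Xmat]
  split_ifs with hi
  · rw [invert_xPol, ← mul_assoc, ← T_add, neg_add_cancel, T_zero, one_mul,
      show i = ⟨n - 1, by omega⟩ from Fin.ext hi]
  · rw [one_mul]
    rfl

theorem onlyNonnegPowers_Gmat_mul_Xmat (hn : 0 < n)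
    (hB : ∀ j : Fin n, OnlyNonnegPowers
      (∑ i ∈ univ.filter (fun i : Fin n => i.val < n - 1),
          zetaPoly N (γ (i.val + 1)) * xPol N (a j i)
        + invert (xPol N (a j ⟨n - 1, by omega⟩)))) (i j : Fin n) :
    OnlyNonnegPowers ((Gmat n N γ * Xmat N a) i j) := by
  by_cases hi : i.val = n - 1
  · rw [Gmat_mul_apply N γ hn, if_pos hi]
    convert hB j using 4 with m hm
    · exact if_neg (mem_filter.mp hm).2.ne
    · exact if_pos rfl
  · rw [Gmat_mul_apply N γ hn, if_neg hi, Xmat, if_neg hi]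
    exact onlyNonnegPowers_xPol N _

theorem onlyNonnegPowers_tildeMat_Xmat_mul_Gmat_neg (hn : 0 < n)
    (hA : ∀ j i : Fin n, i.val < n - 1 → OnlyNonnegPowers
      (zetaPoly N (γ (i.val + 1)) * xPol N (a j ⟨n - 1, by omega⟩) - invert (xPol N (a j i))))
    (j k : Fin n) :
    OnlyNonnegPowers ((tildeMat (Xmat N a) * Gmat n N (-γ)) j k) := by
  rw [mul_Gmat_apply N (-γ) hn]
  split_ifs with hk
  · simp only [tildeMat, Xmat, if_pos hk, involutive_invert _]
    exact onlyNonnegPowers_xPol N _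
  · have hentry : tildeMat (Xmat N a) j k + tildeMat (Xmat N a) j ⟨n - 1, by omega⟩
          * zetaPoly N ((-γ) (k.val + 1))
        = -(zetaPoly N (γ (k.val + 1)) * xPol N (a j ⟨n - 1, by omega⟩)
            - invert (xPol N (a j k))) := by
      simp only [tildeMat, Xmat, if_neg hk, if_pos, involutive_invert _, Pi.neg_apply, zetaPoly_neg]
      ring
    rw [hentry]
    exact (nonnegSubring F).neg_mem (hA j k (by omega))

theorem map_eval₂_one_Xmat
    (hC : ∀ j i : Fin n, ∑ k : Fin (N + 1), a j i k = if i = j then 1 else 0) :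
    (Xmat N a).map (eval₂ (RingHom.id F) 1) = 1 := by
  ext1 i j
  simp only [map_apply, Xmat, apply_ite (eval₂ (RingHom.id F) 1), eval₂_one_invert, ite_self,
    eval₂_one_xPol, hC, one_apply]

end Xmat

theorem stmt10 (F : Type*) [Field F] (n N : ℕ) (hn : 2 ≤ n)
    (γ : ℕ → ℕ → F)
    -- `a j i` is the coefficient list of the polynomial `x^j_i` of degree ≤ N,
    -- `x^j_i(t) = ∑_{k=0}^N (a j i k) t^k`.
    (a : Fin n → Fin n → Fin (N + 1) → F)
    -- condition (a): for each `i = 1, …, n-1`, `ζ_i(t)·x^j_n(t) − x̃^j_i(t)` has only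
    -- nonnegative powers of `t`
    (hA : ∀ j : Fin n, ∀ i : Fin n, i.val < n - 1 →
      OnlyNonnegPowers (zetaPoly N (γ (i.val + 1)) *
        (∑ k : Fin (N + 1), LaurentPolynomial.C (a j ⟨n - 1, by omega⟩ k) *
          LaurentPolynomial.T (k : ℤ)) -
        (∑ k : Fin (N + 1), LaurentPolynomial.C (a j i k) *
          LaurentPolynomial.T (-(k : ℤ)))))
    -- condition (b): `∑_{i=1}^{n-1} ζ_i(t)·x^j_i(t) + x̃^j_n(t)` has only nonnegative powers
    (hB : ∀ j : Fin n,
      OnlyNonnegPowers ((∑ i ∈ Finset.univ.filter (fun i : Fin n => i.val < n - 1),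
        zetaPoly N (γ (i.val + 1)) *
          (∑ k : Fin (N + 1), LaurentPolynomial.C (a j i k) *
            LaurentPolynomial.T (k : ℤ))) +
        (∑ k : Fin (N + 1), LaurentPolynomial.C (a j ⟨n - 1, by omega⟩ k) *
          LaurentPolynomial.T (-(k : ℤ)))))
    -- condition (c): `x^j_i(1) = δ_{i j}`
    (hC : ∀ j i : Fin n, (∑ k : Fin (N + 1), a j i k) = if i = j then 1 else 0)
    -- `U(t)`: its `(i,j)`-entry is `x^j_i(t)` for `i = 1, …, n-1` and its `(n,j)`-entry is
    -- `t^N · x̃^j_n(t)`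
    (Umat : Matrix (Fin n) (Fin n) F[T;T⁻¹])
    (hUmat : ∀ i j : Fin n, Umat i j =
      if i.val = n - 1 then
        LaurentPolynomial.T (N : ℤ) *
          (∑ k : Fin (N + 1), LaurentPolynomial.C (a j ⟨n - 1, by omega⟩ k) *
            LaurentPolynomial.T (-(k : ℤ)))
      else
        (∑ k : Fin (N + 1), LaurentPolynomial.C (a j i k) * LaurentPolynomial.T (k : ℤ))) :
    Paraunitary Umat ∧
    ∀ i j : Fin n, OnlyNonnegPowers
      (((Gmat n N γ * diagTN F n N * Umat : Matrix (Fin n) (Fin n) F[T;T⁻¹])) i j) := by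
  have hn0 : 0 < n := by omega
  have hX : diagTN F n N * Umat = Xmat N a := diagTN_mul_eq_Xmat N hn0 hUmat
  have hGX := onlyNonnegPowers_Gmat_mul_Xmat N γ hn0 fun j => by rw [invert_xPol]; exact hB j
  refine ⟨?_, fun i j => by rw [Matrix.mul_assoc, hX]; exact hGX i j⟩
  have hGG : Gmat n N (-γ) * Gmat n N γ = 1 := by simpa using Gmat_mul_Gmat_neg N (-γ) hn0
  have hXG := onlyNonnegPowers_tildeMat_Xmat_mul_Gmat_neg N γ hn0 fun j i hi => by
    rw [invert_xPol]; exact hA j i hi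
  have hXX : tildeMat (Xmat N a) * Xmat N a = 1 :=
    tildeMat_mul_self_eq_one hGG hXG hGX (map_eval₂_one_Xmat N hC)
  rw [← hX, tildeMat_mul_self_of_mul_left (tildeMat_diagTN_mul_diagTN n N)] at hXX
  exact mul_eq_one_comm.mp hXX
end
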